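/- Well-definedness of the weight function ω^(b): Let k ≥ 1 and let 𝔪, 𝔫 ∈ 𝒫_k. Suppose (i j)·𝔪 = 𝔫 and (i′ j′)·𝔪 = 𝔫 for transpositions (i j) and (i′ j′) in S_{2k}, and let q be the charge function of Γ(𝔪). Then q(i) = q(j) if and only if q(i′) = q(j′). Consequently the value ω^(b)(𝔪,𝔫) ∈ {1, b} does not depend on the choice of transposition sending 𝔪 to 𝔫. -/

import Mathlib

open scoped Classical
open MeasureTheory



/-- A pair partition of `{1, …, 2k}`, encoded as an involution of `ℕ` that
moves exactly the points `1, …, 2k`.  The pairs are the two-element sets `{a, f a}`. -/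
structure PairPartition (k : ℕ) where
  f : ℕ → ℕ
  invol : ∀ a, f (f a) = a
  moves : ∀ a, f a ≠ a ↔ (1 ≤ a ∧ a ≤ 2 * k)

namespace PairPartition

/-- The function underlying the identity (trivial) pair partition
`(1 2 | 3 4 | ⋯ | 2k-1 2k)`. -/
def trivFun (k : ℕ) (a : ℕ) : ℕ :=
  if 1 ≤ a ∧ a ≤ 2 * k then (if a % 2 = 1 then a + 1 else a - 1) else a

/-- The identity pair partition `𝔢_k = (1 2 | 3 4 | ⋯ | 2k-1 2k)`. -/
def triv (k : ℕ) : PairPartition k where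
  f := trivFun k
  invol := by intro a; unfold trivFun; split_ifs <;> omega
  moves := by intro a; unfold trivFun; split_ifs <;> omega

theorem ext' {k : ℕ} {m m' : PairPartition k} (h : m.f = m'.f) : m = m' := by
  cases m; cases m'; simpa using h

/-- The action of the transposition `(i j) ∈ S_{2k}` on pair partitions of `{1, …, 2k}`
(defined to do nothing if `i` or `j` lies outside `{1, …, 2k}`). -/
def swapAct {k : ℕ} (i j : ℕ) (m : PairPartition k) : PairPartition k :=
  if h : 1 ≤ i ∧ i ≤ 2 * k ∧ 1 ≤ j ∧ j ≤ 2 * k then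
    { f := fun a => Equiv.swap i j (m.f (Equiv.swap i j a))
      invol := by intro a; simp [m.invol]
      moves := by
        obtain ⟨hi1, hi2, hj1, hj2⟩ := h
        intro a
        have key : ∀ x y : ℕ, Equiv.swap i j x ≠ y ↔ x ≠ Equiv.swap i j y := by
          intro x y
          constructor
          · intro hxy hc; apply hxy; rw [hc]; simp
          · intro hxy hc; apply hxy; rw [← hc]; simp
        rw [key, ← Equiv.swap_apply_self i j a, Equiv.swap_apply_self i j a]
        rw [m.moves (Equiv.swap i j a)]
        rcases eq_or_ne a i with rfl | hai
        · rw [Equiv.swap_apply_left]; omega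
        rcases eq_or_ne a j with rfl | haj
        · rw [Equiv.swap_apply_right]; omega
        · rw [Equiv.swap_apply_of_ne_of_ne hai haj] }
  else m

/-- Removing the pair `{2k-1, 2k}` from a pair partition: the operation `𝔪 ↦ 𝔪↓`
(defined to return the trivial pair partition if `{2k-1, 2k} ∉ 𝔪`). -/
def down {k : ℕ} (m : PairPartition k) : PairPartition (k - 1) :=
  if h : m.f (2 * k - 1) = 2 * k then
    { f := fun a => if a = 2 * k - 1 ∨ a = 2 * k then a else m.f a
      invol := by
        intro a
        by_cases ha : a = 2 * k - 1 ∨ a = 2 * k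
        · simp [ha]
        · have h2k : m.f (2 * k) = 2 * k - 1 := by
            conv_lhs => rw [← h]
            exact m.invol _
          have hne1 : m.f a ≠ 2 * k - 1 := by
            intro hfa
            have h1 : m.f (m.f a) = m.f (2 * k - 1) := by rw [hfa]
            rw [m.invol, h] at h1
            exact ha (Or.inr h1)
          have hne2 : m.f a ≠ 2 * k := by
            intro hfa
            have h1 : m.f (m.f a) = m.f (2 * k) := by rw [hfa]
            rw [m.invol, h2k] at h1
            exact ha (Or.inl h1)
          simp only [if_neg ha, if_neg (not_or.mpr ⟨hne1, hne2⟩), m.invol]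
      moves := by
        intro a
        by_cases ha : a = 2 * k - 1 ∨ a = 2 * k
        · simp only [if_pos ha]
          rcases ha with ha | ha <;> subst ha <;> constructor <;> intro h' <;> first
            | exact absurd rfl h'
            | omega
        · push_neg at ha
          obtain ⟨ha1, ha2⟩ := ha
          simp only [if_neg (not_or.mpr ⟨ha1, ha2⟩)]
          rw [m.moves a]
          omega }
  else triv (k - 1)

/-- A pair partition as a permutation (involution) of `ℕ`. -/
def perm {k : ℕ} (m : PairPartition k) : Equiv.Perm ℕ :=
  Function.Involutive.toPerm m.f m.invol

end PairPartition

namespace PairPartition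

/-- The connected component (cycle) of the multigraph `Γ(𝔪)` containing a vertex `v`:
the orbit of `v` under the group generated by the involutions `𝔢_k` and `𝔪`. -/
def gammaOrbit {k : ℕ} (m : PairPartition k) (v : ℕ) : Set ℕ :=
  MulAction.orbit (Subgroup.closure {(triv k).perm, m.perm} : Subgroup (Equiv.Perm ℕ)) v

/-- The charge function of `Γ(𝔪)`: `charge m v` holds iff `v` receives charge `+`,
i.e. iff `v` is at even distance (in `Γ(𝔪)`) from the largest label of its cycle.
The vertices at even distance from the largest label `M` of a cycle are exactly the
orbit of `M` under the cyclic group generated by `𝔪 ∘ 𝔢_k`. -/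
def charge {k : ℕ} (m : PairPartition k) (v : ℕ) : Prop :=
  v ∈ MulAction.orbit (Subgroup.zpowers (m.perm * (triv k).perm) : Subgroup (Equiv.Perm ℕ))
        (sSup (gammaOrbit m v))

/-- The weight `ω^(b)(𝔪, (i j)·𝔪)` attached to the transposition `(i j)` acting on `𝔪`:
it is `1` if the charges of `i` and `j` in `Γ(𝔪)` agree, and `b` otherwise. -/
noncomputable def omegab {R : Type*} [CommRing R] (b : R) {k : ℕ}
    (m : PairPartition k) (i j : ℕ) : R :=
  if (charge m i ↔ charge m j) then 1 else b

/-- The number of cycles of `Γ(𝔪)` of length `2ℓ`, i.e. the multiplicity of `ℓ`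
in the coset-type `λ(𝔪)` of `𝔪`. -/
noncomputable def cycleCount {k : ℕ} (m : PairPartition k) (ℓ : ℕ) : ℕ :=
  (((Finset.Icc 1 (2 * k)).filter fun a => (gammaOrbit m a).ncard = 2 * ℓ).card) / (2 * ℓ)

/-- Two pair partitions have the same coset-type iff `Γ(𝔪)` and `Γ(𝔪')` have the same
number of cycles of every length. -/
def SameCosetType {k : ℕ} (m m' : PairPartition k) : Prop :=
  ∀ ℓ : ℕ, cycleCount m ℓ = cycleCount m' ℓ

/-- The pair partition `𝔪` has coset-type the multiset `μ` (a partition of `k`,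
presented as the multiset of its parts). -/
def HasCosetType {k : ℕ} (m : PairPartition k) (μ : Multiset ℕ) : Prop :=
  ∀ ℓ : ℕ, 1 ≤ ℓ → μ.count ℓ = cycleCount m ℓ

/-- All lists of length `n` with entries in the finset `S`. -/
def listsLen (S : Finset (ℕ × ℕ)) : ℕ → Finset (List (ℕ × ℕ))
  | 0 => {[]}
  | n + 1 => (S ×ˢ listsLen S n).image fun p => p.1 :: p.2

/-- Apply a sequence `τ = (τ_1, …, τ_r)` of transpositions (each encoded as a pair)
to a pair partition, the rightmost transposition acting first:
`τ_1 ∘ τ_2 ∘ ⋯ ∘ τ_r · 𝔪`. -/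
def applyFacts {k : ℕ} (l : List (ℕ × ℕ)) (m : PairPartition k) : PairPartition k :=
  l.foldr (fun t acc => swapAct t.1 t.2 acc) m

/-- `l` is a monotone factorisation of the pair partition `𝔪 ∈ 𝒫_k`: a sequence of
transpositions `(a_s b_s)` with `a_s < b_s`, all `b_s` odd, `b_1 ≤ b_2 ≤ ⋯ ≤ b_r`,
and `τ_1 ∘ ⋯ ∘ τ_r · 𝔪 = 𝔢_k`. -/
def IsMonoFact {k : ℕ} (m : PairPartition k) (l : List (ℕ × ℕ)) : Prop :=
  (∀ t ∈ l, 1 ≤ t.1 ∧ t.1 < t.2 ∧ t.2 ≤ 2 * k ∧ Odd t.2) ∧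
  List.Pairwise (· ≤ ·) (l.map Prod.snd) ∧
  applyFacts l m = triv k

/-- The hive number of a monotone factorisation: the number of distinct values among
`b_1, …, b_r`. -/
def hive (l : List (ℕ × ℕ)) : ℕ := (l.map Prod.snd).toFinset.card

/-- The flip number of a monotone factorisation `τ` of `𝔪`: the number of indices `s`
with `ω^(b)(𝔪^(s), τ_s · 𝔪^(s)) = b`, where `𝔪^(s) = τ_{s+1} ∘ ⋯ ∘ τ_r · 𝔪`. -/
noncomputable def flip {k : ℕ} (m : PairPartition k) : List (ℕ × ℕ) → ℕ
  | [] => 0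
  | t :: rest =>
      (if (charge (applyFacts rest m) t.1 ↔ charge (applyFacts rest m) t.2) then 0 else 1)
        + flip m rest

/-- The finset of monotone factorisations of `𝔪 ∈ 𝒫_k` of length `r`. -/
noncomputable def monoFinset {k : ℕ} (m : PairPartition k) (r : ℕ) : Finset (List (ℕ × ℕ)) :=
  (listsLen ((Finset.Icc 1 (2 * k)) ×ˢ (Finset.Icc 1 (2 * k))) r).filter fun l => IsMonoFact m l

/-- A sequence of transpositions is connected (relative to level `k`) if together with the
involution `ι = (1 2)(3 4)⋯(2k-1 2k)` it generates a subgroup acting transitively on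
`{1, …, 2k}`. -/
def IsConnectedFact (k : ℕ) (l : List (ℕ × ℕ)) : Prop :=
  ∀ a ∈ Finset.Icc 1 (2 * k), ∀ b ∈ Finset.Icc 1 (2 * k),
    ∃ σ ∈ Subgroup.closure
        ({(triv k).perm} ∪ {p : Equiv.Perm ℕ | ∃ t ∈ l, p = Equiv.swap t.1 t.2}),
      σ a = b

end PairPartition


noncomputable instance matrixMeasurableSpace {N : ℕ} :
    MeasurableSpace (Matrix (Fin N) (Fin N) ℝ) :=
  inferInstanceAs (MeasurableSpace (Fin N → Fin N → ℝ))

/-- The compact group `O(N)` of real orthogonal `N × N` matrices. -/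
abbrev OrthGroup (N : ℕ) := Matrix.orthogonalGroup (Fin N) ℝ

noncomputable instance orthMeasurableSpace {N : ℕ} : MeasurableSpace (OrthGroup N) :=
  borel _

/-- The diagonal matrix `I_{M,N}` whose first `M` diagonal entries are `1` and whose
remaining entries are `0`. -/
def IMN (N M : ℕ) : Matrix (Fin N) (Fin N) ℝ :=
  Matrix.diagonal fun p => if (p : ℕ) < M then (1 : ℝ) else 0

/-- The map `O ↦ O · I_{M,N} · Oᵀ` from `O(N)` onto the space `A(M,N)` of idempotent
real symmetric `N × N` matrices of rank `M`. -/
def grassMap (N M : ℕ) (O : OrthGroup N) : Matrix (Fin N) (Fin N) ℝ :=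
  (O : Matrix (Fin N) (Fin N) ℝ) * IMN N M * Matrix.transpose (O : Matrix (Fin N) (Fin N) ℝ)


/-- The product `A_{i(1)i(2)} A_{i(3)i(4)} ⋯ A_{i(2k-1)i(2k)}` of matrix entries. -/
def prodEntries {N : ℕ} (k : ℕ) (i : ℕ → Fin N) (A : Matrix (Fin N) (Fin N) ℝ) : ℝ :=
  ∏ a ∈ Finset.range k, A (i (2 * a + 1)) (i (2 * a + 2))



open PairPartition


/-- A step in the (`b`- or `bt`-) Weingarten graph: a type-A edge `𝔪 → (i 2k-1)·𝔪`,
a type-B edge `𝔪 → 𝔪↓`, or a type-C edge `𝔪 → ((i 2k-1)·𝔪)↓`. -/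
inductive WStep where
  | A (i : ℕ) : WStep
  | B : WStep
  | C (i : ℕ) : WStep
deriving DecidableEq

/-- `IsPathTo k 𝔪 ρ` holds iff `ρ` is a path in the `bt`-Weingarten graph from the
pair partition `𝔪 ∈ 𝒫_k` to the empty pair partition. -/
def IsPathTo : (k : ℕ) → PairPartition k → List WStep → Prop
  | 0, _, [] => True
  | _ + 1, _, [] => False
  | 0, _, _ :: _ => False
  | k + 1, m, WStep.A i :: ρ =>
      1 ≤ i ∧ i ≤ 2 * (k + 1) - 2 ∧ IsPathTo (k + 1) (swapAct i (2 * (k + 1) - 1) m) ρ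
  | k + 1, m, WStep.B :: ρ =>
      m.f (2 * (k + 1) - 1) = 2 * (k + 1) ∧ IsPathTo k (down m) ρ
  | k + 1, m, WStep.C i :: ρ =>
      1 ≤ i ∧ i ≤ 2 * (k + 1) - 2 ∧ m.f i = 2 * (k + 1) ∧
        IsPathTo k (down (swapAct i (2 * (k + 1) - 1) m)) ρ

/-- The product of the `b`-dependent edge weights along a path. -/
noncomputable def pathWeight {R : Type*} [CommRing R] (b : R) :
    (k : ℕ) → PairPartition k → List WStep → R
  | _, _, [] => 1
  | 0, _, _ :: _ => 1
  | k + 1, m, WStep.A i :: ρ =>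
      omegab b m i (2 * (k + 1) - 1) * pathWeight b (k + 1) (swapAct i (2 * (k + 1) - 1) m) ρ
  | k + 1, m, WStep.B :: ρ => pathWeight b k (down m) ρ
  | k + 1, m, WStep.C i :: ρ => pathWeight b k (down (swapAct i (2 * (k + 1) - 1) m)) ρ

/-- The number of type-A edges of a path. -/
def countA (l : List WStep) : ℕ :=
  (l.filter fun s => match s with | WStep.A _ => true | _ => false).length

/-- The number of type-B edges of a path. -/
def countB (l : List WStep) : ℕ :=
  (l.filter fun s => match s with | WStep.B => true | _ => false).length

/-- The number of type-C edges of a path. -/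
def countC (l : List WStep) : ℕ :=
  (l.filter fun s => match s with | WStep.C _ => true | _ => false).length

/-- The `b`-Weingarten function `Wg^(b)(𝔪) ∈ ℤ[b]⟦X⟧`: the coefficient of `X^n` is the
sum of `(-1)^{ℓ_A(ρ)} w(ρ)` over all paths `ρ` (with no type-C edges, i.e. paths in the
`b`-Weingarten graph) from `𝔪` to the empty pair partition with `ℓ_A(ρ) + ℓ_B(ρ) = n`.
Here `b` is the polynomial variable of `ℤ[b]`. -/
noncomputable def WgB (k : ℕ) (m : PairPartition k) : PowerSeries (Polynomial ℤ) :=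
  PowerSeries.mk fun n =>
    ∑ᶠ (ρ : List WStep)
      (_ : IsPathTo k m ρ ∧ (∀ i, WStep.C i ∉ ρ) ∧ countA ρ + countB ρ = n),
      (-1 : Polynomial ℤ) ^ countA ρ * pathWeight (Polynomial.X : Polynomial ℤ) k m ρ

/-- The `bt`-Weingarten function `Wg^(bt)(𝔪) ∈ (ℤ[b,y])⟦X⟧`: the coefficient of `X^n` is
the sum of `(-1)^{ℓ_A(ρ)} y^{ℓ_B(ρ)} w(ρ)` over all paths `ρ` in the `bt`-Weingarten graph
from `𝔪` to the empty pair partition with `ℓ_A(ρ) + ℓ_C(ρ) = n`.  Here `b = X 0` and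
`y = X 1` in `ℤ[b,y] = MvPolynomial (Fin 2) ℤ`. -/
noncomputable def WgBT (k : ℕ) (m : PairPartition k) :
    PowerSeries (MvPolynomial (Fin 2) ℤ) :=
  PowerSeries.mk fun n =>
    ∑ᶠ (ρ : List WStep) (_ : IsPathTo k m ρ ∧ countA ρ + countC ρ = n),
      (-1 : MvPolynomial (Fin 2) ℤ) ^ countA ρ * (MvPolynomial.X 1) ^ countB ρ *
        pathWeight (MvPolynomial.X 0 : MvPolynomial (Fin 2) ℤ) k m ρ

/-- The standard basis vector `𝔪` of the free module with basis `𝒫_k`,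
realised as functions `𝒫_k → R`. -/
noncomputable def basisVec {R : Type*} [CommRing R] (k : ℕ) (m : PairPartition k) :
    PairPartition k → R :=
  fun n => if n = m then 1 else 0

/-- The `b`-deformed Jucys–Murphy operator `𝒥_i` acting on the free module with basis
`𝒫_k` (realised as functions `𝒫_k → R`): on basis vectors,
`𝒥_i(𝔪) = ∑_{a=1}^{2i-2} ω^(b)((a 2i-1)·𝔪, 𝔪) · (a 2i-1)·𝔪`. -/
noncomputable def JbOp {R : Type*} [CommRing R] (b : R) {k : ℕ} (i : ℕ)
    (v : PairPartition k → R) : PairPartition k → R :=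
  fun n => ∑ a ∈ Finset.Icc 1 (2 * i - 2),
    omegab b n a (2 * i - 1) * v (swapAct a (2 * i - 1) n)

/-- The (odd) Jucys–Murphy element `J_{2i-1} = ∑_{a=1}^{2i-2} (a
 2i-1)` of the group
algebra of `S_{2k}`, acting on the free module with basis `𝒫_k` via the linear extension
of the `S_{2k}`-action on pair partitions. -/
noncomputable def JoddOp {R : Type*} [CommRing R] {k : ℕ} (i : ℕ)
    (v : PairPartition k → R) : PairPartition k → R :=
  fun n => ∑ a ∈ Finset.Icc 1 (2 * i - 2), v (swapAct a (2 * i - 1) n)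

/-- The vector `𝔭_μ = ∑_{𝔪 : λ(𝔪) = μ} 𝔪`, i.e. the indicator function of the set of
pair partitions of coset-type `μ`. -/
noncomputable def pVec {R : Type*} [CommRing R] (k : ℕ) (μ : Multiset ℕ) :
    PairPartition k → R :=
  fun m => if HasCosetType m μ then 1 else 0

noncomputable def applyPows {R : Type*} [CommRing R] (b : R) {k : ℕ} :
    List (ℕ × ℕ) → (PairPartition k → R) → (PairPartition k → R)
  | [], v => v
  | ia :: rest, v => (JbOp b ia.1)^[ia.2] (applyPows b rest v)


/-- The coefficient ring `ℤ[b,y]⟦X⟧`, with `b = X 0` and `y = X 1`. -/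
abbrev SeriesRing := PowerSeries (MvPolynomial (Fin 2) ℤ)

noncomputable def bS : SeriesRing := PowerSeries.C (MvPolynomial.X 0)
noncomputable def yS : SeriesRing := PowerSeries.C (MvPolynomial.X 1)

/-- The operator-valued power series `(1 + X·𝒥_i)⁻¹ = ∑_{j ≥ 0} (-X)^j 𝒥_i^j`
applied to a vector `v`, computed coefficientwise. -/
noncomputable def invApply (k : ℕ) (i : ℕ) (v : PairPartition k → SeriesRing) :
    PairPartition k → SeriesRing :=
  fun n => PowerSeries.mk fun d =>
    ∑ᶠ j : ℕ, PowerSeries.coeff d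
      ((-(PowerSeries.X : SeriesRing)) ^ j * ((JbOp bS i)^[j] v) n)

/-- The vector `(y + X𝒥_j)(1 + X𝒥_j)⁻¹ ⋯ (y + X𝒥_1)(1 + X𝒥_1)⁻¹ (𝔢_k)`. -/
noncomputable def prodVec (k : ℕ) : ℕ → (PairPartition k → SeriesRing)
  | 0 => fun n => if n = triv k then 1 else 0
  | j + 1 => fun n =>
      yS * invApply k (j + 1) (prodVec k j) n +
        PowerSeries.X * (JbOp bS (j + 1) (invApply k (j + 1) (prodVec k j))) n


open MvPolynomial

/-- The formal partial derivative `∂_n = ∂/∂p_n` on the polynomial ring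
`K[p_1, p_2, …]` (the variables being indexed by positive naturals);
junk value `0` for `n = 0`. -/
noncomputable def pd (K : Type*) [CommRing K] (n : ℕ) :
    MvPolynomial ℕ+ K →ₗ[K] MvPolynomial ℕ+ K :=
  if h : 0 < n then (pderiv (⟨n, h⟩ : ℕ+)).toLinearMap else 0

/-- The variable `p_n` of `K[p_1, p_2, …]`; junk value `0` for `n = 0`. -/
noncomputable def pvar (K : Type*) [CommRing K] (n : ℕ) : MvPolynomial ℕ+ K :=
  if h : 0 < n then X ⟨n, h⟩ else 0

section SumOp

variable (K : Type*) [CommRing K]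

lemma sumOp_support_subset (m : ℕ) (f : MvPolynomial ℕ+ K) :
    (Function.support fun i => ((i + m : ℕ) : K) • (pvar K i * pd K (i + m) f)) ⊆
      ((fun i => i + m) ⁻¹' ↑(f.vars.image (fun v : ℕ+ => (v : ℕ)))) := by
  intro i hi
  simp only [Function.mem_support] at hi
  by_contra hmem
  apply hi
  rcases Nat.eq_zero_or_pos (i + m) with h0 | h0
  · have hi0 : i = 0 := by omega
    subst hi0
    simp [pvar]
  · have hnot : (⟨i + m, h0⟩ : ℕ+) ∉ f.vars := by
      intro hv
      apply hmem
      simp only [Set.mem_preimage, Finset.coe_image, Set.mem_image, Finset.mem_coe]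
      exact ⟨⟨i + m, h0⟩, hv, rfl⟩
    have hz : pd K (i + m) f = 0 := by
      have e : pd K (i + m) = (pderiv (⟨i + m, h0⟩ : ℕ+)).toLinearMap := by
        unfold pd
        exact dif_pos h0
      rw [e]
      have := pderiv_eq_zero_of_notMem_vars (R := K) hnot
      first
        | exact this
        | simpa using this
    rw [hz, mul_zero, smul_zero]

lemma sumOp_support_finite (m : ℕ) (f : MvPolynomial ℕ+ K) :
    (Function.support fun i => ((i + m : ℕ) : K) • (pvar K i * pd K (i + m) f)).Finite := by
  apply Set.Finite.subset _ (sumOp_support_subset K m f)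
  apply Set.Finite.preimage
  · exact (add_left_injective m).injOn
  · exact (f.vars.image (fun v : ℕ+ => (v : ℕ))).finite_toSet

/-- The operator `∑_{i ≥ 1} (i+m) p_i ∂_{i+m}` on `K[p_1, p_2, …]`
(a well-defined linear operator, the sum being locally finite on polynomials). -/
noncomputable def sumOp (m : ℕ) : MvPolynomial ℕ+ K →ₗ[K] MvPolynomial ℕ+ K where
  toFun f := ∑ᶠ i : ℕ, ((i + m : ℕ) : K) • (pvar K i * pd K (i + m) f)
  map_add' x y := by
    have key : ∀ i : ℕ, ((i + m : ℕ) : K) • (pvar K i * pd K (i + m) (x + y)) =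
        ((i + m : ℕ) : K) • (pvar K i * pd K (i + m) x) +
          ((i + m : ℕ) : K) • (pvar K i * pd K (i + m) y) := by
      intro i
      rw [map_add, mul_add, smul_add]
    try dsimp only
    rw [finsum_congr key]
    exact finsum_add_distrib (sumOp_support_finite K m x) (sumOp_support_finite K m y)
  map_smul' c x := by
    have key : ∀ i : ℕ, ((i + m : ℕ) : K) • (pvar K i * pd K (i + m) (c • x)) =
        c • (((i + m : ℕ) : K) • (pvar K i * pd K (i + m) x)) := by
      intro i
      rw [_root_.map_smul, smul_comm]
      congr 1
      rw [mul_smul_comm]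
    try dsimp only
    rw [finsum_congr key]
    simp only [RingHom.id_apply]
    exact (smul_finsum' c (sumOp_support_finite K m x)).symm
end SumOp

/-- The `bt`-deformed Virasoro-type operator `L_m` of Theorem 3.5/4.7, acting on the
polynomial ring `K[p_1, p_2, …]`. -/
noncomputable def Lop (K : Type*) [CommRing K] (b t z hbar : K) (m : ℕ) :
    MvPolynomial ℕ+ K →ₗ[K] MvPolynomial ℕ+ K :=
  (((m : K) * Ring.inverse hbar) • pd K m)
    - (1 + b) • (∑ i ∈ Finset.Ioo 0 m,
        (((i : ℕ) : K) * (((m - i : ℕ)) : K)) • (pd K i ∘ₗ pd K (m - i)))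
    - sumOp K m
    - ((b * (m : K) * ((m - 1 : ℕ) : K)) • pd K m)
    - ((z * Ring.inverse hbar * (t - 1) * ((m - 1 : ℕ) : K)) • pd K (m - 1))
    - (if m = 1 then (z * Ring.inverse hbar * Ring.inverse hbar * Ring.inverse (1 + b)) •
        (LinearMap.id : MvPolynomial ℕ+ K →ₗ[K] MvPolynomial ℕ+ K) else 0)
open PairPartition

/-- `i : {1,…,2k} → {1,…,N}` is admissible for `𝔪`: `{a,b} ∈ 𝔪` implies `i a = i b`. -/
def Admissible {N : ℕ} (k : ℕ) (m : PairPartition k) (i : ℕ → Fin N) : Prop :=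
  ∀ a, 1 ≤ a → a ≤ 2 * k → i (m.f a) = i a

/-- `i : {1,…,2k} → {1,…,N}` is strongly admissible for `𝔪`:
for `a, b ∈ {1,…,2k}`, `i a = i b` holds iff `a = b` or `{a,b} ∈ 𝔪`. -/
def StronglyAdmissible {N : ℕ} (k : ℕ) (m : PairPartition k) (i : ℕ → Fin N) : Prop :=
  ∀ a b, 1 ≤ a → a ≤ 2 * k → 1 ≤ b → b ≤ 2 * k → (i a = i b ↔ (a = b ∨ m.f a = b))

/-- `ĥ^{(t)}_r(𝔪)` evaluated at a real number `t`: the weighted count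
`∑_{τ ∈ Mono(𝔪), ℓ(τ) = r} t^{hive(τ)}`. -/
noncomputable def hiveSum {k : ℕ} (m : PairPartition k) (r : ℕ) (t : ℝ) : ℝ :=
  ∑ l ∈ monoFinset m r, t ^ hive l

/-- The `bt`-monotone count `∑_{τ ∈ Mono(𝔪), ℓ(τ) = r} b^{flip(τ)} t^{hive(τ)}`
in `ℤ[b,t]`, with `b = X 0` and `t = X 1`. -/
noncomputable def btSum {k : ℕ} (m : PairPartition k) (r : ℕ) : MvPolynomial (Fin 2) ℤ :=
  ∑ l ∈ monoFinset m r,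
    (MvPolynomial.X 0 : MvPolynomial (Fin 2) ℤ) ^ (flip m l) *
      (MvPolynomial.X 1) ^ (hive l)

/-- The connected `bt`-monotone count
`∑_{τ ∈ CMono(𝔪), ℓ(τ) = r} b^{flip(τ)} t^{hive(τ)}` in `ℚ[b,t]`,
with `b = X 0` and `t = X 1`. -/
noncomputable def cMonoSum {k : ℕ} (m : PairPartition k) (r : ℕ) : MvPolynomial (Fin 2) ℚ :=
  ∑ l ∈ (monoFinset m r).filter (fun l => IsConnectedFact k l),
    (MvPolynomial.X 0 : MvPolynomial (Fin 2) ℚ) ^ (flip m l) *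
      (MvPolynomial.X 1) ^ (hive l)

/-- The operator `c + J_{2i-1}` on the free module with basis `𝒫_k`. -/
noncomputable def affJoddOp {k : ℕ} (c : ℝ) (i : ℕ) (v : PairPartition k → ℝ) :
    PairPartition k → ℝ :=
  fun n => c * v n + JoddOp i v n


/-!
The charge alternates along every cycle of `Γ(𝔪)`: `q(𝔪(v)) = -q(v)`. Indeed, `𝔢` and `𝔪` are
fixed-point-free involutions on `{1, …, 2k}`, so the group they generate is dihedral with rotation
`c = 𝔪𝔢`, the orbit of `v` splits into the `c`-orbits of `v` and `𝔪(v)`, and these are disjoint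
because `𝔪(v) = cⁿ(v)` would force `𝔪` or `𝔢` to fix a point of the cycle.

If `(i j)·𝔪 = (i' j')·𝔪` with `{i, j} ≠ {i', j'}`, evaluating both conjugates of `𝔪` at `j` and
`j'` shows that either `{i, j}` and `{i', j'}` are both pairs of `𝔪`, or `𝔪` pairs `i` and `j`
with `i'` and `j'` in some order. In each case the alternation of charges gives the claim.
-/

section Dihedral

variable {G : Type*} [Group G] {r s : G}

theorem mul_zpow_mul_eq_zpow_neg_mul (hr : r * r = 1) (hs : s * s = 1) (n : ℤ) :
    r * (r * s) ^ n = (r * s) ^ (-n) * r := by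
  have hr' : r⁻¹ = r := inv_eq_of_mul_eq_one_right hr
  have hconj : r * (r * s) * r⁻¹ = (r * s)⁻¹ := by
    rw [hr', mul_inv_rev, hr', inv_eq_of_mul_eq_one_right hs, ← mul_assoc, hr, one_mul]
  rw [zpow_neg, ← inv_zpow, ← hconj, conj_zpow, inv_mul_cancel_right]

theorem exists_zpow_of_mem_closure_pair (hr : r * r = 1) (hs : s * s = 1) {g : G}
    (hg : g ∈ Subgroup.closure {s, r}) :
    ∃ n : ℤ, g = (r * s) ^ n ∨ g = (r * s) ^ n * r := by
  have hr' : r⁻¹ = r := inv_eq_of_mul_eq_one_right hr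
  induction hg using Subgroup.closure_induction with
  | mem g hg =>
    rcases hg with rfl | rfl
    · refine ⟨-1, Or.inr ?_⟩
      rw [zpow_neg_one, mul_inv_rev, hr', mul_assoc, hr, mul_one, inv_eq_of_mul_eq_one_right hs]
    · exact ⟨0, Or.inr (by rw [zpow_zero, one_mul])⟩
  | one => exact ⟨0, Or.inl (zpow_zero _).symm⟩
  | mul a b _ _ ha hb =>
    obtain ⟨p, rfl | rfl⟩ := ha <;> obtain ⟨q, rfl | rfl⟩ := hb
    · exact ⟨p + q, Or.inl (zpow_add _ p q).symm⟩
    · exact ⟨p + q, Or.inr (by rw [← mul_assoc, ← zpow_add])⟩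
    · refine ⟨p - q, Or.inr ?_⟩
      rw [mul_assoc, mul_zpow_mul_eq_zpow_neg_mul hr hs, ← mul_assoc, ← zpow_add, sub_eq_add_neg]
    · refine ⟨p - q, Or.inl ?_⟩
      rw [mul_assoc, ← mul_assoc r, mul_zpow_mul_eq_zpow_neg_mul hr hs, mul_assoc, hr, mul_one,
        ← zpow_add, sub_eq_add_neg]
  | inv a _ ha =>
    obtain ⟨p, rfl | rfl⟩ := ha
    · exact ⟨-p, Or.inl (zpow_neg _ p).symm⟩
    · refine ⟨p, Or.inr ?_⟩
      rw [mul_inv_rev, hr', ← zpow_neg, mul_zpow_mul_eq_zpow_neg_mul hr hs, neg_neg]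

variable {α : Type*} [MulAction G α]

open MulAction

theorem smul_ne_zpow_smul_of_involutive (hr : r * r = 1) (hs : s * s = 1) {S : Set α} {v : α}
    (hvS : ∀ j : ℤ, (r * s) ^ j • v ∈ S) (hrS : ∀ x ∈ S, r • x ≠ x) (hsS : ∀ x ∈ S, s • x ≠ x)
    (n : ℤ) : r • v ≠ (r * s) ^ n • v := by
  intro h
  have hreflect : ∀ j : ℤ, r • (r * s) ^ j • v = (r * s) ^ (n - j) • v := fun j => by
    rw [smul_smul, mul_zpow_mul_eq_zpow_neg_mul hr hs, mul_smul, h, smul_smul, ← zpow_add,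
      neg_add_eq_sub]
  obtain ⟨j, rfl | rfl⟩ := Int.even_or_odd' n
  · exact hrS _ (hvS j) (by rw [hreflect, two_mul, add_sub_cancel_right])
  · refine hsS _ (hvS j) ?_
    calc s • (r * s) ^ j • v = r • (r * s) ^ (1 + j) • v := by
          rw [zpow_one_add, mul_smul, smul_smul r, ← mul_assoc, hr, one_mul]
      _ = (r * s) ^ j • v := by rw [hreflect]; congr 2; ring

theorem mem_orbit_zpowers_of_mem_orbit_closure_pair (hr : r * r = 1) (hs : s * s = 1)
    {v x : α} (hx : x ∈ orbit (Subgroup.closure {s, r}) v) :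
    x ∈ orbit (Subgroup.zpowers (r * s)) v ∨ x ∈ orbit (Subgroup.zpowers (r * s)) (r • v) := by
  obtain ⟨⟨g, hg⟩, rfl⟩ := hx
  obtain ⟨n, rfl | rfl⟩ := exists_zpow_of_mem_closure_pair hr hs hg
  · exact Or.inl ⟨⟨_, Subgroup.zpow_mem_zpowers _ n⟩, rfl⟩
  · exact Or.inr ⟨⟨_, Subgroup.zpow_mem_zpowers _ n⟩, (mul_smul _ _ _).symm⟩

theorem mem_orbit_zpowers_smul_iff_not_mem (hr : r * r = 1) (hs : s * s = 1) {v x : α}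
    (hv : ∀ n : ℤ, r • v ≠ (r * s) ^ n • v) (hx : x ∈ orbit (Subgroup.closure {s, r}) v) :
    x ∈ orbit (Subgroup.zpowers (r * s)) (r • v) ↔ x ∉ orbit (Subgroup.zpowers (r * s)) v := by
  refine ⟨fun hrv hv' => ?_, (mem_orbit_zpowers_of_mem_orbit_closure_pair hr hs hx).resolve_left⟩
  have : r • v ∈ orbit (Subgroup.zpowers (r * s)) v := by
    rw [← orbit_eq_iff, ← orbit_eq_iff.mpr hrv, orbit_eq_iff.mpr hv']
  obtain ⟨⟨g, hg⟩, hgv⟩ := this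
  obtain ⟨n, rfl⟩ := Subgroup.mem_zpowers_iff.mp hg
  exact hv n hgv.symm

end Dihedral

theorem Function.Involutive.swap_conj_eq_swap_conj_cases {α : Type*} [DecidableEq α]
    {f : α → α} (hf : Function.Involutive f) {i j i' j' : α} (hij : i ≠ j) (hij' : i' ≠ j')
    (hi : f i ≠ i) (hi' : f i' ≠ i')
    (H : ∀ a, Equiv.swap i j (f (Equiv.swap i j a)) = Equiv.swap i' j' (f (Equiv.swap i' j' a))) :
    (f i = j ∧ f i' = j') ∨ (f i = i' ∧ f j = j') ∨ (f i = j' ∧ f j = i') ∨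
      (i = i' ∧ j = j') ∨ (i = j' ∧ j = i') := by
  have hff : ∀ x, f (f x) = x := hf
  have Hj := H j
  have Hj' := H j'
  simp only [Equiv.swap_apply_def] at Hj Hj'
  grind [hf.injective]

namespace PairPartition

open scoped Pointwise

variable {k : ℕ} (m : PairPartition k)

theorem f_ne_self {a : ℕ} (ha : a ∈ Set.Icc 1 (2 * k)) : m.f a ≠ a :=
  (m.moves a).mpr ha

theorem perm_mul_self : m.perm * m.perm = 1 :=
  Equiv.ext m.invol

theorem perm_mem_stabilizer :
    m.perm ∈ MulAction.stabilizer (Equiv.Perm ℕ) (Set.Icc 1 (2 * k)) := by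
  refine MulAction.mem_stabilizer_set.mpr fun a => ?_
  change m.f a ∈ Set.Icc 1 (2 * k) ↔ a ∈ Set.Icc 1 (2 * k)
  rw [Set.mem_Icc, Set.mem_Icc, ← m.moves, ← m.moves, m.invol]
  exact ne_comm

theorem closure_le_stabilizer :
    Subgroup.closure {(triv k).perm, m.perm} ≤
      MulAction.stabilizer (Equiv.Perm ℕ) (Set.Icc 1 (2 * k)) :=
  Subgroup.closure_le _ |>.mpr <|
    Set.insert_subset_iff.mpr ⟨(triv k).perm_mem_stabilizer, Set.singleton_subset_iff.mpr
      m.perm_mem_stabilizer⟩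

theorem charge_f_iff {v : ℕ} (hv : v ∈ Set.Icc 1 (2 * k)) :
    charge m (m.f v) ↔ ¬ charge m v := by
  have hr := m.perm_mul_self
  have hs := (triv k).perm_mul_self
  have hstab : ∀ g ∈ Subgroup.closure {(triv k).perm, m.perm}, ∀ x,
      g • x ∈ Set.Icc 1 (2 * k) ↔ x ∈ Set.Icc 1 (2 * k) := fun g hg =>
    MulAction.mem_stabilizer_set.mp (m.closure_le_stabilizer hg)
  have hsup : sSup (gammaOrbit m v) ∈ gammaOrbit m v := by
    refine Nat.sSup_mem ⟨v, MulAction.mem_orbit_self v⟩ ⟨2 * k, ?_⟩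
    rintro _ ⟨⟨g, hg⟩, rfl⟩
    exact ((hstab g hg v).mpr hv).2
  have hrot : m.perm * (triv k).perm ∈ Subgroup.closure {(triv k).perm, m.perm} :=
    mul_mem (Subgroup.subset_closure (by simp)) (Subgroup.subset_closure (by simp))
  have hrefl := smul_ne_zpow_smul_of_involutive hr hs
    (fun j => (hstab _ (zpow_mem hrot j) v).mpr hv) (fun _ => m.f_ne_self)
    (fun _ => (triv k).f_ne_self)
  have horbit : gammaOrbit m (m.f v) = gammaOrbit m v :=
    MulAction.orbit_eq_iff.mpr ⟨⟨m.perm, Subgroup.subset_closure (by simp)⟩, rfl⟩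
  unfold charge
  rw [horbit, MulAction.mem_orbit_symm, MulAction.mem_orbit_symm (a₁ := v)]
  exact mem_orbit_zpowers_smul_iff_not_mem hr hs hrefl hsup

theorem swapAct_f {i j : ℕ} (h : 1 ≤ i ∧ i ≤ 2 * k ∧ 1 ≤ j ∧ j ≤ 2 * k) (a : ℕ) :
    (swapAct i j m).f a = Equiv.swap i j (m.f (Equiv.swap i j a)) := by
  rw [swapAct, dif_pos h]

end PairPartition

theorem omegab_well_defined_general
    (k : ℕ) (m n : PairPartition k)
    (i j i' j' : ℕ) (hij : i ≠ j) (hij' : i' ≠ j')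
    (hi : 1 ≤ i) (hi2 : i ≤ 2 * k) (hj : 1 ≤ j) (hj2 : j ≤ 2 * k)
    (hi' : 1 ≤ i') (hi2' : i' ≤ 2 * k) (hj' : 1 ≤ j') (hj2' : j' ≤ 2 * k)
    (h1 : swapAct i j m = n) (h2 : swapAct i' j' m = n) :
    ((charge m i ↔ charge m j) ↔ (charge m i' ↔ charge m j')) ∧
      omegab (Polynomial.X : Polynomial ℤ) m i j =
        omegab (Polynomial.X : Polynomial ℤ) m i' j' := by
  have H : ∀ a, Equiv.swap i j (m.f (Equiv.swap i j a)) =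
      Equiv.swap i' j' (m.f (Equiv.swap i' j' a)) := fun a => by
    rw [← m.swapAct_f ⟨hi, hi2, hj, hj2⟩, ← m.swapAct_f ⟨hi', hi2', hj', hj2'⟩, h1, h2]
  have hq : ∀ {v w}, 1 ≤ v → v ≤ 2 * k → m.f v = w → (charge m w ↔ ¬ charge m v) :=
    fun hv hv2 hw => hw ▸ m.charge_f_iff ⟨hv, hv2⟩
  have key : (charge m i ↔ charge m j) ↔ (charge m i' ↔ charge m j') := by
    rcases Function.Involutive.swap_conj_eq_swap_conj_cases m.invol hij hij'
      (m.f_ne_self ⟨hi, hi2⟩) (m.f_ne_self ⟨hi', hi2'⟩) H with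
      ⟨ha, hb⟩ | ⟨ha, hb⟩ | ⟨ha, hb⟩ | ⟨rfl, rfl⟩ | ⟨rfl, rfl⟩
    · have := hq hi hi2 ha; have := hq hi' hi2' hb; tauto
    · have := hq hi hi2 ha; have := hq hj hj2 hb; tauto
    · have := hq hi hi2 ha; have := hq hj hj2 hb; tauto
    · rfl
    · exact Iff.comm
  exact ⟨key, if_congr key rfl rfl⟩

/-- **Well-definedness of the weight function `ω^(b)`** (Definition 4.1 and the
discussion following it).  Let `k ≥ 1` and `𝔪, 𝔫 ∈ 𝒫_k`.  If `(i j)·𝔪 = 𝔫` and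
`(i' j')·𝔪 = 𝔫` for transpositions `(i j), (i' j') ∈ S_{2k}`, and `q` is the charge
function of `Γ(𝔪)`, then `q(i) = q(j) ↔ q(i') = q(j')`.  Consequently the value
`ω^(b)(𝔪,𝔫) ∈ {1, b}` does not depend on the choice of transposition sending `𝔪`
to `𝔫` (here stated over `ℤ[b]`, with `b` the polynomial variable). -/
theorem omegab_well_defined
    (k : ℕ) (hk : 1 ≤ k) (m n : PairPartition k)
    (i j i' j' : ℕ) (hij : i ≠ j) (hij' : i' ≠ j')
    (hi : 1 ≤ i) (hi2 : i ≤ 2 * k) (hj : 1 ≤ j) (hj2 : j ≤ 2 * k)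
    (hi' : 1 ≤ i') (hi2' : i' ≤ 2 * k) (hj' : 1 ≤ j') (hj2' : j' ≤ 2 * k)
    (h1 : swapAct i j m = n) (h2 : swapAct i' j' m = n) :
    ((charge m i ↔ charge m j) ↔ (charge m i' ↔ charge m j')) ∧
      omegab (Polynomial.X : Polynomial ℤ) m i j =
        omegab (Polynomial.X : Polynomial ℤ) m i' j' :=
  omegab_well_defined_general k m n i j i' j' hij hij' hi hi2 hj hj2 hi' hi2' hj' hj2' h1 h2
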